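/- The full string w = w₁ w₂ ⋯ w_{3d+6} is generated by the grammar G (i.e. S ⇒* w) if and only if the Boolean product C = A×B is not the all-zeroes matrix, i.e. if and only if there exist indices i, j, k with 1 ≤ i, j, k ≤ m such that a_{ik} = 1 and b_{kj} = 1. -/

import Mathlib

/- Formalization of (part of) the reduction of Boolean matrix multiplication
to context-free grammar parsing (Lee, "Fast context-free grammar parsing
requires fast Boolean matrix multiplication"). -/

namespace CFGBMM

/-- Nonterminals of the grammars of the reduction. -/
inductive NT : Type where
  | S : NT                 -- start symbol
  | T : NT                 -- extra symbol of the CNF grammar G'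
  | W : NT                 -- derives arbitrary nonempty substrings
  | Wl : ℕ → NT            -- `W_ℓ` of G'
  | X : ℕ → NT             -- `X_ℓ` of G'
  | A : ℕ → ℕ → NT         -- `A_{p,q}`
  | B : ℕ → ℕ → NT         -- `B_{p,q}`
  | C : ℕ → ℕ → NT         -- `C_{p,q}`
deriving DecidableEq

abbrev Sym : Type := Symbol ℕ NT

/-- `d = ⌈m^(1/3)⌉`. -/
noncomputable def dOf (m : ℕ) : ℕ := ⌈(m : ℝ) ^ ((1 : ℝ) / 3)⌉₊

/-- The substring `w_ℓ ⋯ w_r` of the input string `w = w₁ ⋯ w_{3d+6}`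
(in which `w_ℓ` is just the terminal `ℓ`), as a sentential form. -/
def seg (l r : ℕ) : List Sym := (List.range' l (r + 1 - l)).map Symbol.terminal

/-- W-rules of `G`:  `W → w_ℓ W | w_ℓ`  for `1 ≤ ℓ ≤ 3d+6`. -/
def WRules (d : ℕ) : Set (ContextFreeRule ℕ NT) :=
  {r | ∃ l, 1 ≤ l ∧ l ≤ 3 * d + 6 ∧
    (r = ⟨NT.W, [Symbol.terminal l, Symbol.nonterminal NT.W]⟩ ∨
     r = ⟨NT.W, [Symbol.terminal l]⟩)}

/-- A-rules of `G`:  `A_{i₁,j₁} → w_{i₂} W w_{j₂+δ}`  for each nonzero entry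
`a_{ij}` of `A` (here `i₁ = ⌊i/d⌋`, `i₂ = (i mod d) + 2`, `δ = d + 2`). -/
def ARules (m d : ℕ) (a : ℕ → ℕ → ℕ) : Set (ContextFreeRule ℕ NT) :=
  {r | ∃ i j, 1 ≤ i ∧ i ≤ m ∧ 1 ≤ j ∧ j ≤ m ∧ a i j = 1 ∧
    r = ⟨NT.A (i / d) (j / d),
      [Symbol.terminal (i % d + 2), Symbol.nonterminal NT.W,
       Symbol.terminal (j % d + 2 + (d + 2))]⟩}

/-- B-rules of `G`:  `B_{i₁,j₁} → w_{i₂+1+δ} W w_{j₂+2δ}`  for each nonzero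
entry `b_{ij}` of `B`. -/
def BRules (m d : ℕ) (b : ℕ → ℕ → ℕ) : Set (ContextFreeRule ℕ NT) :=
  {r | ∃ i j, 1 ≤ i ∧ i ≤ m ∧ 1 ≤ j ∧ j ≤ m ∧ b i j = 1 ∧
    r = ⟨NT.B (i / d) (j / d),
      [Symbol.terminal (i % d + 2 + 1 + (d + 2)), Symbol.nonterminal NT.W,
       Symbol.terminal (j % d + 2 + 2 * (d + 2))]⟩}

/-- C-rules:  `C_{p,q} → A_{p,r} B_{r,q}`  for all `0 ≤ p, q, r ≤ d²`. -/
def CRules (d : ℕ) : Set (ContextFreeRule ℕ NT) :=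
  {r | ∃ p q t, p ≤ d ^ 2 ∧ q ≤ d ^ 2 ∧ t ≤ d ^ 2 ∧
    r = ⟨NT.C p q, [Symbol.nonterminal (NT.A p t), Symbol.nonterminal (NT.B t q)]⟩}

/-- S-rules of `G`:  `S → W C_{p,q} W`  for all `0 ≤ p, q ≤ d²`. -/
def SRules (d : ℕ) : Set (ContextFreeRule ℕ NT) :=
  {r | ∃ p q, p ≤ d ^ 2 ∧ q ≤ d ^ 2 ∧
    r = ⟨NT.S, [Symbol.nonterminal NT.W, Symbol.nonterminal (NT.C p q),
      Symbol.nonterminal NT.W]⟩}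

/-- The production set of the grammar `G` of the reduction. -/
def RulesG (m d : ℕ) (a b : ℕ → ℕ → ℕ) : Set (ContextFreeRule ℕ NT) :=
  WRules d ∪ ARules m d a ∪ BRules m d b ∪ CRules d ∪ SRules d

/-- One rewriting step using some rule from the rule set `R`. -/
def Produces (R : Set (ContextFreeRule ℕ NT)) (u v : List Sym) : Prop :=
  ∃ r ∈ R, r.Rewrites u v

/-- The usual context-free derivation relation `⇒*` for the rule set `R`. -/
def Derives (R : Set (ContextFreeRule ℕ NT)) : List Sym → List Sym → Prop :=
  Relation.ReflTransGen (Produces R)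

/-! ### Auxiliary machinery -/

section Aux

lemma derives_ctx {R : Set (ContextFreeRule ℕ NT)} {u v : List Sym}
    (h : Derives R u v) (x y : List Sym) :
    Derives R (x ++ u ++ y) (x ++ v ++ y) := by
  induction h with
  | refl => exact Relation.ReflTransGen.refl
  | tail _ hstep ih =>
      obtain ⟨r, hr, hrw⟩ := hstep
      exact ih.tail ⟨r, hr, (hrw.append_left x).append_right y⟩

lemma derives_append_append {R : Set (ContextFreeRule ℕ NT)} {u1 u2 v1 v2 : List Sym}
    (h1 : Derives R u1 v1) (h2 : Derives R u2 v2) :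
    Derives R (u1 ++ u2) (v1 ++ v2) := by
  have a1 := derives_ctx h1 [] u2
  have a2 := derives_ctx h2 v1 []
  simp only [List.nil_append, List.append_nil] at a1 a2
  exact a1.trans a2

lemma seg_single (x : ℕ) : seg x x = [Symbol.terminal x] := by
  simp [seg]

lemma seg_glue {l m r : ℕ} (h1 : l ≤ m + 1) (h2 : m ≤ r) :
    seg l m ++ seg (m + 1) r = seg l r := by
  unfold seg
  rw [← List.map_append]
  congr 1
  have h := List.range'_append_1 (s := l) (m := m + 1 - l) (n := r + 1 - (m + 1))
  rw [show l + (m + 1 - l) = m + 1 by omega] at h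
  rw [h]
  congr 1
  omega

lemma seg_glue2 {l m m' r : ℕ} (h : m' = m + 1) (h1 : l ≤ m') (h2 : m ≤ r) :
    seg l m ++ seg m' r = seg l r := by
  subst h; exact seg_glue h1 h2

lemma range'_adjacent : ∀ (u : List ℕ) {x n a c : ℕ} {v : List ℕ},
    List.range' x n = u ++ a :: c :: v → c = a + 1
  | [], x, n, a, c, v, h => by
      cases n with
      | zero => simp at h
      | succ n =>
        rw [List.range'_succ] at h
        simp only [List.nil_append, List.cons.injEq] at h
        obtain ⟨rfl, h2⟩ := h
        cases n with
        | zero => simp at h2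
        | succ n =>
          rw [List.range'_succ] at h2
          simp only [List.cons.injEq] at h2
          omega
  | (e :: u), x, n, a, c, v, h => by
      cases n with
      | zero => simp at h
      | succ n =>
        rw [List.range'_succ] at h
        simp only [List.cons_append, List.cons.injEq] at h
        exact range'_adjacent u h.2

/-! ### Semantics of nonterminals -/

def DenA (m d : ℕ) (a : ℕ → ℕ → ℕ) (p q : ℕ) (s : List ℕ) : Prop :=
  ∃ i j mid, 1 ≤ i ∧ i ≤ m ∧ 1 ≤ j ∧ j ≤ m ∧ a i j = 1 ∧ i / d = p ∧ j / d = q ∧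
    s = (i % d + 2) :: (mid ++ [j % d + 2 + (d + 2)])

def DenB (m d : ℕ) (b : ℕ → ℕ → ℕ) (p q : ℕ) (s : List ℕ) : Prop :=
  ∃ i j mid, 1 ≤ i ∧ i ≤ m ∧ 1 ≤ j ∧ j ≤ m ∧ b i j = 1 ∧ i / d = p ∧ j / d = q ∧
    s = (i % d + 2 + 1 + (d + 2)) :: (mid ++ [j % d + 2 + 2 * (d + 2)])

def DenC (m d : ℕ) (a b : ℕ → ℕ → ℕ) (p q : ℕ) (s : List ℕ) : Prop :=
  ∃ t s1 s2, s = s1 ++ s2 ∧ DenA m d a p t s1 ∧ DenB m d b t q s2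

def DenS (m d : ℕ) (a b : ℕ → ℕ → ℕ) (s : List ℕ) : Prop :=
  ∃ p q s0 s1 s2, DenC m d a b p q s1 ∧ s = s0 ++ s1 ++ s2

def Den (m d : ℕ) (a b : ℕ → ℕ → ℕ) : NT → List ℕ → Prop
  | NT.S, s => DenS m d a b s
  | NT.A p q, s => DenA m d a p q s
  | NT.B p q, s => DenB m d b p q s
  | NT.C p q, s => DenC m d a b p q s
  | _, _ => True

inductive Sat (m d : ℕ) (a b : ℕ → ℕ → ℕ) : List Sym → List ℕ → Prop
  | nil : Sat m d a b [] []
  | term (t : ℕ) {u : List Sym} {s : List ℕ} :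
      Sat m d a b u s → Sat m d a b (Symbol.terminal t :: u) (t :: s)
  | nt (n : NT) {s1 : List ℕ} {u : List Sym} {s : List ℕ} :
      Den m d a b n s1 → Sat m d a b u s →
      Sat m d a b (Symbol.nonterminal n :: u) (s1 ++ s)

variable {m d : ℕ} {a b : ℕ → ℕ → ℕ}

lemma Sat.append_inv : ∀ {u v : List Sym} {s : List ℕ},
    Sat m d a b (u ++ v) s →
    ∃ s1 s2, s = s1 ++ s2 ∧ Sat m d a b u s1 ∧ Sat m d a b v s2 := by
  intro u
  induction u with
  | nil => exact fun h => ⟨[], _, rfl, Sat.nil, h⟩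
  | cons x u ih =>
    intro v s h
    cases h with
    | term t h' =>
        obtain ⟨s1, s2, rfl, hu, hv⟩ := ih h'
        exact ⟨t :: s1, s2, rfl, Sat.term t hu, hv⟩
    | nt n hden h' =>
        obtain ⟨s1, s2, rfl, hu, hv⟩ := ih h'
        exact ⟨_ ++ s1, s2, by rw [List.append_assoc], Sat.nt n hden hu, hv⟩

lemma Sat.append : ∀ {u v : List Sym} {s1 s2 : List ℕ},
    Sat m d a b u s1 → Sat m d a b v s2 → Sat m d a b (u ++ v) (s1 ++ s2) := by
  intro u v s1 s2 hu hv
  induction hu with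
  | nil => simpa using hv
  | term t _ ih => exact Sat.term t ih
  | nt n hden _ ih =>
      rw [List.cons_append, List.append_assoc]
      exact Sat.nt n hden ih

lemma sat_of_terminals (s : List ℕ) : Sat m d a b (s.map Symbol.terminal) s := by
  induction s with
  | nil => exact Sat.nil
  | cons x s ih => exact Sat.term x ih

lemma sat_single_nt {n : NT} {s : List ℕ}
    (h : Sat m d a b [Symbol.nonterminal n] s) : Den m d a b n s := by
  cases h with
  | nt n hden hrest =>
      cases hrest
      simpa using hden

lemma rule_sound {r : ContextFreeRule ℕ NT} {s : List ℕ}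
    (hr : r ∈ RulesG m d a b) (h : Sat m d a b r.output s) :
    Den m d a b r.input s := by
  rcases hr with (((hr | hr) | hr) | hr) | hr
  · -- W rules
    obtain ⟨l, _, _, (rfl | rfl)⟩ := hr <;> exact trivial
  · -- A rules
    obtain ⟨i, j, hi1, hi2, hj1, hj2, hij, rfl⟩ := hr
    cases h with
    | term _ h =>
      cases h with
      | nt _ hden h =>
        cases h with
        | term _ h =>
          cases h
          exact ⟨i, j, _, hi1, hi2, hj1, hj2, hij, rfl, rfl, rfl⟩
  · -- B rules
    obtain ⟨i, j, hi1, hi2, hj1, hj2, hij, rfl⟩ := hr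
    cases h with
    | term _ h =>
      cases h with
      | nt _ hden h =>
        cases h with
        | term _ h =>
          cases h
          exact ⟨i, j, _, hi1, hi2, hj1, hj2, hij, rfl, rfl, rfl⟩
  · -- C rules
    obtain ⟨p, q, t, hp, hq, ht, rfl⟩ := hr
    cases h with
    | nt _ hA h =>
      cases h with
      | nt _ hB h =>
        cases h
        exact ⟨t, _, _, by simp, hA, hB⟩
  · -- S rules
    obtain ⟨p, q, hp, hq, rfl⟩ := hr
    cases h with
    | nt _ _ h =>
      cases h with
      | nt _ hC h =>
        cases h with
        | nt _ _ h =>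
          cases h
          exact ⟨p, q, _, _, _, hC, (List.append_assoc _ _ _).symm⟩

lemma step_sound {u v : List Sym} {s : List ℕ}
    (h : Produces (RulesG m d a b) u v) (hv : Sat m d a b v s) :
    Sat m d a b u s := by
  obtain ⟨r, hr, hrw⟩ := h
  obtain ⟨p, q, rfl, rfl⟩ := hrw.exists_parts
  obtain ⟨s12, s3, rfl, h12, h3⟩ := Sat.append_inv hv
  obtain ⟨s1, s2, rfl, h1, h2⟩ := Sat.append_inv h12
  have hden := rule_sound hr h2
  have : Sat m d a b ((p ++ [Symbol.nonterminal r.input]) ++ q)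
      ((s1 ++ (s2 ++ [])) ++ s3) :=
    Sat.append (Sat.append h1 (Sat.nt _ hden Sat.nil)) h3
  simpa using this

lemma derives_sound {u v : List Sym} {s : List ℕ}
    (h : Derives (RulesG m d a b) u v) (hv : Sat m d a b v s) :
    Sat m d a b u s := by
  induction h with
  | refl => exact hv
  | tail _ hstep ih => exact ih (step_sound hstep hv)

/-! ### W derives arbitrary segments -/

lemma W_derives_seg (m d : ℕ) (a b : ℕ → ℕ → ℕ) :
    ∀ (n l : ℕ), 1 ≤ l → l + n ≤ 3 * d + 6 →
      Derives (RulesG m d a b) [Symbol.nonterminal NT.W] (seg l (l + n))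
  | 0, l, h1, h2 => by
      rw [Nat.add_zero, seg_single]
      refine Relation.ReflTransGen.single
        ⟨⟨NT.W, [Symbol.terminal l]⟩, ?_, ContextFreeRule.Rewrites.input_output⟩
      exact Set.mem_union_left _ (Set.mem_union_left _ (Set.mem_union_left _
        (Set.mem_union_left _ ⟨l, h1, by omega, Or.inr rfl⟩)))
  | (n+1), l, h1, h2 => by
      have step1 : Produces (RulesG m d a b) [Symbol.nonterminal NT.W]
          [Symbol.terminal l, Symbol.nonterminal NT.W] :=
        ⟨⟨NT.W, [Symbol.terminal l, Symbol.nonterminal NT.W]⟩,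
          Set.mem_union_left _ (Set.mem_union_left _ (Set.mem_union_left _
            (Set.mem_union_left _ ⟨l, h1, by omega, Or.inl rfl⟩))),
          ContextFreeRule.Rewrites.input_output⟩
      have ih := W_derives_seg m d a b n (l + 1) (by omega) (by omega)
      have lift := derives_ctx ih [Symbol.terminal l] []
      have hseq : [Symbol.terminal l] ++ seg (l + 1) (l + 1 + n) = seg l (l + (n + 1)) := by
        rw [← seg_single l, seg_glue (by omega) (by omega)]
        congr 1
        omega
      refine Relation.ReflTransGen.head step1 ?_
      rw [← hseq]
      simpa [Derives] using lift

end Aux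

/-- **Corollary 2 of the paper.** The full string `w = w₁ ⋯ w_{3d+6}` is
generated by `G` (i.e. `S ⇒* w`) iff the Boolean product `C = A × B` is not
the all-zeroes matrix, i.e. iff there exist `1 ≤ i, j, k ≤ m` with
`a_{ik} = 1` and `b_{kj} = 1`. -/
theorem start_derives_word_iff_product_nonzero
    (m : ℕ) (hm : 1 ≤ m) (a b : ℕ → ℕ → ℕ)
    (ha : ∀ i j, a i j = 0 ∨ a i j = 1) (hb : ∀ i j, b i j = 0 ∨ b i j = 1)
    (d δ : ℕ) (hd : d = dOf m) (hδ : δ = d + 2) :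
    Derives (RulesG m d a b) [Symbol.nonterminal NT.S] (seg 1 (3 * d + 6)) ↔
      ∃ i j k, 1 ≤ i ∧ i ≤ m ∧ 1 ≤ j ∧ j ≤ m ∧ 1 ≤ k ∧ k ≤ m ∧
        a i k = 1 ∧ b k j = 1 := by
  -- basic numeric facts about d
  have hm1 : (1 : ℝ) ≤ (m : ℝ) := by exact_mod_cast hm
  have hcb : (m : ℝ) ^ ((1 : ℝ) / 3) ≤ (d : ℝ) := by
    rw [hd, dOf]; exact_mod_cast Nat.le_ceil _
  have h1le : (1 : ℝ) ≤ (m : ℝ) ^ ((1 : ℝ) / 3) := by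
    have := Real.rpow_le_rpow (by norm_num) hm1 (by norm_num : (0:ℝ) ≤ 1/3)
    simpa using this
  have hd1 : 1 ≤ d := by
    have : (1 : ℝ) ≤ (d : ℝ) := le_trans h1le hcb
    exact_mod_cast this
  have hd0 : 0 < d := hd1
  have hm3 : m ≤ d ^ 3 := by
    have h0 : (0 : ℝ) ≤ (m : ℝ) ^ ((1 : ℝ) / 3) := by positivity
    have hcalc : (m : ℝ) ≤ (d : ℝ) ^ (3 : ℕ) := by
      calc (m : ℝ) = ((m : ℝ) ^ ((1 : ℝ) / 3)) ^ (3 : ℕ) := by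
            rw [← Real.rpow_natCast ((m : ℝ) ^ ((1 : ℝ) / 3)) 3,
              ← Real.rpow_mul (by positivity)]
            norm_num
        _ ≤ (d : ℝ) ^ (3 : ℕ) := by
            exact pow_le_pow_left₀ h0 hcb 3
    exact_mod_cast hcalc
  have hdiv : ∀ x : ℕ, x ≤ m → x / d ≤ d ^ 2 := by
    intro x hx
    have h1 : x / d ≤ d ^ 3 / d := Nat.div_le_div_right (le_trans hx hm3)
    have h2 : d ^ 3 / d = d ^ 2 := by
      rw [pow_succ, Nat.mul_div_cancel _ hd0]
    omega
  constructor
  · -- forward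
    intro hder
    have hsat : Sat m d a b [Symbol.nonterminal NT.S] (List.range' 1 (3 * d + 6)) := by
      refine derives_sound hder ?_
      have hseg : seg 1 (3 * d + 6) =
          (List.range' 1 (3 * d + 6)).map Symbol.terminal := by
        simp [seg]
      rw [hseg]
      exact sat_of_terminals _
    have hDenS : DenS m d a b (List.range' 1 (3 * d + 6)) := sat_single_nt hsat
    obtain ⟨p, q, s0, sc, s2, hC, heq⟩ := hDenS
    obtain ⟨t, sA, sB, rfl, hA, hB⟩ := hC
    obtain ⟨i, k1, midA, hi1, hi2, hk11, hk12, hika, hpd, htd, hsA⟩ := hA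
    obtain ⟨k2, j, midB, hk21, hk22, hj1, hj2, hkjb, htd2, hqd, hsB⟩ := hB
    subst hsA hsB
    have key : List.range' 1 (3 * d + 6) =
        (s0 ++ (i % d + 2) :: midA) ++ (k1 % d + 2 + (d + 2)) ::
          (k2 % d + 2 + 1 + (d + 2)) :: (midB ++ (j % d + 2 + 2 * (d + 2)) :: s2) := by
      rw [heq]; simp
    have hadj := range'_adjacent _ key
    have hk : k1 = k2 := by
      have e1 := Nat.div_add_mod k1 d
      have e2 := Nat.div_add_mod k2 d
      rw [htd] at e1
      rw [htd2] at e2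
      omega
    exact ⟨i, j, k1, hi1, hi2, hj1, hj2, hk11, hk12, hika, by rw [hk]; exact hkjb⟩
  · -- backward
    rintro ⟨i, j, k, hi1, hi2, hj1, hj2, hk1, hk2, hA, hB⟩
    have hid : i % d < d := Nat.mod_lt _ hd0
    have hjd : j % d < d := Nat.mod_lt _ hd0
    have hkd : k % d < d := Nat.mod_lt _ hd0
    have hp : i / d ≤ d ^ 2 := hdiv i hi2
    have hq : j / d ≤ d ^ 2 := hdiv j hj2
    have ht : k / d ≤ d ^ 2 := hdiv k hk2
    -- rule memberships
    have hrS : (⟨NT.S, [Symbol.nonterminal NT.W, Symbol.nonterminal (NT.C (i/d) (j/d)),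
        Symbol.nonterminal NT.W]⟩ : ContextFreeRule ℕ NT) ∈ RulesG m d a b :=
      Set.mem_union_right _ ⟨i/d, j/d, hp, hq, rfl⟩
    have hrC : (⟨NT.C (i/d) (j/d), [Symbol.nonterminal (NT.A (i/d) (k/d)),
        Symbol.nonterminal (NT.B (k/d) (j/d))]⟩ : ContextFreeRule ℕ NT) ∈ RulesG m d a b :=
      Set.mem_union_left _ (Set.mem_union_right _ ⟨i/d, j/d, k/d, hp, hq, ht, rfl⟩)
    have hrA : (⟨NT.A (i/d) (k/d), [Symbol.terminal (i % d + 2), Symbol.nonterminal NT.W,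
        Symbol.terminal (k % d + 2 + (d + 2))]⟩ : ContextFreeRule ℕ NT) ∈ RulesG m d a b :=
      Set.mem_union_left _ (Set.mem_union_left _ (Set.mem_union_left _
        (Set.mem_union_right _ ⟨i, k, hi1, hi2, hk1, hk2, hA, rfl⟩)))
    have hrB : (⟨NT.B (k/d) (j/d), [Symbol.terminal (k % d + 2 + 1 + (d + 2)),
        Symbol.nonterminal NT.W,
        Symbol.terminal (j % d + 2 + 2 * (d + 2))]⟩ : ContextFreeRule ℕ NT) ∈ RulesG m d a b :=
      Set.mem_union_left _ (Set.mem_union_left _ (Set.mem_union_right _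
        ⟨k, j, hk1, hk2, hj1, hj2, hB, rfl⟩))
    have step1 : Produces (RulesG m d a b) [Symbol.nonterminal NT.S]
        [Symbol.nonterminal NT.W, Symbol.nonterminal (NT.C (i/d) (j/d)),
         Symbol.nonterminal NT.W] :=
      ⟨_, hrS, ContextFreeRule.Rewrites.input_output⟩
    have step2 : Produces (RulesG m d a b)
        [Symbol.nonterminal NT.W, Symbol.nonterminal (NT.C (i/d) (j/d)),
         Symbol.nonterminal NT.W]
        [Symbol.nonterminal NT.W, Symbol.nonterminal (NT.A (i/d) (k/d)),
         Symbol.nonterminal (NT.B (k/d) (j/d)), Symbol.nonterminal NT.W] :=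
      ⟨_, hrC, ContextFreeRule.rewrites_of_exists_parts _
        [Symbol.nonterminal NT.W] [Symbol.nonterminal NT.W]⟩
    have step3 : Produces (RulesG m d a b)
        [Symbol.nonterminal NT.W, Symbol.nonterminal (NT.A (i/d) (k/d)),
         Symbol.nonterminal (NT.B (k/d) (j/d)), Symbol.nonterminal NT.W]
        [Symbol.nonterminal NT.W, Symbol.terminal (i % d + 2), Symbol.nonterminal NT.W,
         Symbol.terminal (k % d + 2 + (d + 2)),
         Symbol.nonterminal (NT.B (k/d) (j/d)), Symbol.nonterminal NT.W] :=
      ⟨_, hrA, ContextFreeRule.rewrites_of_exists_parts _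
        [Symbol.nonterminal NT.W]
        [Symbol.nonterminal (NT.B (k/d) (j/d)), Symbol.nonterminal NT.W]⟩
    have step4 : Produces (RulesG m d a b)
        [Symbol.nonterminal NT.W, Symbol.terminal (i % d + 2), Symbol.nonterminal NT.W,
         Symbol.terminal (k % d + 2 + (d + 2)),
         Symbol.nonterminal (NT.B (k/d) (j/d)), Symbol.nonterminal NT.W]
        [Symbol.nonterminal NT.W, Symbol.terminal (i % d + 2), Symbol.nonterminal NT.W,
         Symbol.terminal (k % d + 2 + (d + 2)),
         Symbol.terminal (k % d + 2 + 1 + (d + 2)), Symbol.nonterminal NT.W,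
         Symbol.terminal (j % d + 2 + 2 * (d + 2)), Symbol.nonterminal NT.W] :=
      ⟨_, hrB, ContextFreeRule.rewrites_of_exists_parts _
        [Symbol.nonterminal NT.W, Symbol.terminal (i % d + 2), Symbol.nonterminal NT.W,
         Symbol.terminal (k % d + 2 + (d + 2))]
        [Symbol.nonterminal NT.W]⟩
    -- W derivations for the four gaps
    have WD : ∀ l r : ℕ, 1 ≤ l → l ≤ r → r ≤ 3 * d + 6 →
        Derives (RulesG m d a b) [Symbol.nonterminal NT.W] (seg l r) := by
      intro l r h1 h2 h3
      have h := W_derives_seg m d a b (r - l) l h1 (by omega)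
      rwa [show l + (r - l) = r from by omega] at h
    have w1 := WD 1 (i % d + 2 - 1) (by omega) (by omega) (by omega)
    have w2 := WD (i % d + 2 + 1) (k % d + 2 + (d + 2) - 1) (by omega) (by omega) (by omega)
    have w3 := WD (k % d + 2 + 1 + (d + 2) + 1) (j % d + 2 + 2 * (d + 2) - 1)
      (by omega) (by omega) (by omega)
    have w4 := WD (j % d + 2 + 2 * (d + 2) + 1) (3 * d + 6) (by omega) (by omega) (by omega)
    have rfl1 : Derives (RulesG m d a b) [Symbol.terminal (i % d + 2)]
        [Symbol.terminal (i % d + 2)] := Relation.ReflTransGen.refl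
    have hbig :
        Derives (RulesG m d a b)
          ([Symbol.nonterminal NT.W] ++ ([Symbol.terminal (i % d + 2)] ++
            ([Symbol.nonterminal NT.W] ++ ([Symbol.terminal (k % d + 2 + (d + 2))] ++
              ([Symbol.terminal (k % d + 2 + 1 + (d + 2))] ++
                ([Symbol.nonterminal NT.W] ++
                  ([Symbol.terminal (j % d + 2 + 2 * (d + 2))] ++
                    [Symbol.nonterminal NT.W])))))))
          (seg 1 (i % d + 2 - 1) ++ ([Symbol.terminal (i % d + 2)] ++
            (seg (i % d + 2 + 1) (k % d + 2 + (d + 2) - 1) ++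
              ([Symbol.terminal (k % d + 2 + (d + 2))] ++
                ([Symbol.terminal (k % d + 2 + 1 + (d + 2))] ++
                  (seg (k % d + 2 + 1 + (d + 2) + 1) (j % d + 2 + 2 * (d + 2) - 1) ++
                    ([Symbol.terminal (j % d + 2 + 2 * (d + 2))] ++
                      (seg (j % d + 2 + 2 * (d + 2) + 1) (3 * d + 6))))))))) :=
      derives_append_append w1 (derives_append_append Relation.ReflTransGen.refl
        (derives_append_append w2 (derives_append_append Relation.ReflTransGen.refl
          (derives_append_append Relation.ReflTransGen.refl
            (derives_append_append w3 (derives_append_append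
              Relation.ReflTransGen.refl w4))))))
    -- glue the segments
    have e1 : seg (j % d + 2 + 2 * (d + 2)) (j % d + 2 + 2 * (d + 2)) ++
        seg (j % d + 2 + 2 * (d + 2) + 1) (3 * d + 6) =
        seg (j % d + 2 + 2 * (d + 2)) (3 * d + 6) :=
      seg_glue2 rfl (by omega) (by omega)
    have e2 : seg (k % d + 2 + 1 + (d + 2) + 1) (j % d + 2 + 2 * (d + 2) - 1) ++
        seg (j % d + 2 + 2 * (d + 2)) (3 * d + 6) =
        seg (k % d + 2 + 1 + (d + 2) + 1) (3 * d + 6) :=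
      seg_glue2 (by omega) (by omega) (by omega)
    have e3 : seg (k % d + 2 + 1 + (d + 2)) (k % d + 2 + 1 + (d + 2)) ++
        seg (k % d + 2 + 1 + (d + 2) + 1) (3 * d + 6) =
        seg (k % d + 2 + 1 + (d + 2)) (3 * d + 6) :=
      seg_glue2 rfl (by omega) (by omega)
    have e4 : seg (k % d + 2 + (d + 2)) (k % d + 2 + (d + 2)) ++
        seg (k % d + 2 + 1 + (d + 2)) (3 * d + 6) =
        seg (k % d + 2 + (d + 2)) (3 * d + 6) :=
      seg_glue2 (by omega) (by omega) (by omega)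
    have e5 : seg (i % d + 2 + 1) (k % d + 2 + (d + 2) - 1) ++
        seg (k % d + 2 + (d + 2)) (3 * d + 6) =
        seg (i % d + 2 + 1) (3 * d + 6) :=
      seg_glue2 (by omega) (by omega) (by omega)
    have e6 : seg (i % d + 2) (i % d + 2) ++ seg (i % d + 2 + 1) (3 * d + 6) =
        seg (i % d + 2) (3 * d + 6) :=
      seg_glue2 rfl (by omega) (by omega)
    have e7 : seg 1 (i % d + 2 - 1) ++ seg (i % d + 2) (3 * d + 6) =
        seg 1 (3 * d + 6) :=
      seg_glue2 (by omega) (by omega) (by omega)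
    have efinal : seg 1 (i % d + 2 - 1) ++ ([Symbol.terminal (i % d + 2)] ++
        (seg (i % d + 2 + 1) (k % d + 2 + (d + 2) - 1) ++
          ([Symbol.terminal (k % d + 2 + (d + 2))] ++
            ([Symbol.terminal (k % d + 2 + 1 + (d + 2))] ++
              (seg (k % d + 2 + 1 + (d + 2) + 1) (j % d + 2 + 2 * (d + 2) - 1) ++
                ([Symbol.terminal (j % d + 2 + 2 * (d + 2))] ++
                  (seg (j % d + 2 + 2 * (d + 2) + 1) (3 * d + 6)))))))) =
        seg 1 (3 * d + 6) := by
      rw [← seg_single (i % d + 2), ← seg_single (k % d + 2 + (d + 2)),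
        ← seg_single (k % d + 2 + 1 + (d + 2)), ← seg_single (j % d + 2 + 2 * (d + 2)),
        e1, e2, e3, e4, e5, e6, e7]
    refine Relation.ReflTransGen.head step1 (Relation.ReflTransGen.head step2
      (Relation.ReflTransGen.head step3 (Relation.ReflTransGen.head step4 ?_)))
    rw [← efinal]
    exact hbig


end CFGBMM
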